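/- Let l₀,…,l₄ be ℂ-linearly independent linear forms in R. Let M be the 6×6 skew-symmetric matrix over R with rows (0, 0, 0, 0, l₀, l₁), (0, 0, 0, −l₀, 0, l₂), (0, 0, 0, −l₁, −l₂, 0), (0, l₀, l₁, 0, l₃, 0), (−l₀, 0, l₂, −l₃, 0, 0), (−l₁, −l₂, 0, 0, 0, 0), and let S be the 6×2 matrix over R with first column (l₂, −l₁, l₀, 0, 0, 0) and second column (0, 0, l₃, l₂, −l₁, l₀). Then: (i) the kernel of the R-module homomorphism R⁶ → R², v ↦ Sᵀv, equals the image of the R-module homomorphism R⁶ → R⁶, v ↦ Mv; (ii) the ideal of R generated by the fifteen 2×2 minors of S equals the sub-Pfaffian ideal I₄(M). -/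

import Mathlib

open MvPolynomial Matrix

noncomputable section

/-- The polynomial ring `R = ℂ[x₀,…,x₄]`. -/
abbrev Rp : Type := MvPolynomial (Fin 5) ℂ

/-- The sub-Pfaffian `q_{αβ}(N)` of a `6 × 6` matrix: for `α < β` it is
`N_{ij}N_{kl} − N_{ik}N_{jl} + N_{il}N_{jk}` where `i < j < k < l` are the elements of
`{0,…,5} ∖ {α,β}`. -/
def subPf {A : Type*} [CommRing A] (N : Matrix (Fin 6) (Fin 6) A) (α β : Fin 6) : A :=
  match (List.finRange 6).filter (fun i => decide (i ≠ α) && decide (i ≠ β)) with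
  | [i, j, k, m] => N i j * N k m - N i k * N j m + N i m * N j k
  | _ => 0

/-- The Pfaffian of a `6 × 6` skew-symmetric matrix. -/
def pf {A : Type*} [CommRing A] (N : Matrix (Fin 6) (Fin 6) A) : A :=
  N 0 1 * subPf N 0 1 - N 0 2 * subPf N 0 2 + N 0 3 * subPf N 0 3
    - N 0 4 * subPf N 0 4 + N 0 5 * subPf N 0 5

/-- The sub-Pfaffian ideal `I₄(N)`, generated by the fifteen sub-Pfaffians. -/
def pfIdeal4 {A : Type*} [CommRing A] (N : Matrix (Fin 6) (Fin 6) A) : Ideal A :=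
  Ideal.span {x | ∃ α β : Fin 6, α < β ∧ x = subPf N α β}

set_option maxRecDepth 10000
section Helpers

/-- `p` does not involve the variable `i`. -/
def XFree (i : Fin 5) (p : Rp) : Prop := ∀ m : Fin 5 →₀ ℕ, m i ≠ 0 → coeff m p = 0

lemma X_dvd_iff_coeff {i : Fin 5} {p : Rp} :
    X i ∣ p ↔ ∀ m : Fin 5 →₀ ℕ, m i = 0 → coeff m p = 0 := by
  rw [X_dvd_iff_modMonomial_eq_zero]
  constructor
  · intro h m hm
    have h2 := congrArg (coeff m) h
    rw [coeff_modMonomial_of_not_le, coeff_zero] at h2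
    · exact h2
    · rw [Finsupp.single_le_iff, hm]; omega
  · intro h
    ext m
    by_cases hle : Finsupp.single i 1 ≤ m
    · rw [coeff_modMonomial_of_le _ hle, coeff_zero]
    · rw [coeff_modMonomial_of_not_le _ hle, coeff_zero]
      apply h
      by_contra hmi
      exact hle (by rw [Finsupp.single_le_iff]; omega)

lemma XFree.mul {i : Fin 5} {p q : Rp} (hp : XFree i p) (hq : XFree i q) : XFree i (p * q) := by
  intro m hm
  rw [coeff_mul]
  apply Finset.sum_eq_zero
  rintro ⟨a, b⟩ hab
  rw [Finset.HasAntidiagonal.mem_antidiagonal] at hab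
  rcases Nat.eq_zero_or_pos (a i) with ha | ha
  · have hb : b i ≠ 0 := by
      have := congrArg (fun f => f i) hab
      simp only [Finsupp.add_apply] at this
      omega
    rw [hq b hb, mul_zero]
  · rw [hp a (by omega), zero_mul]

lemma XFree.add {i : Fin 5} {p q : Rp} (hp : XFree i p) (hq : XFree i q) : XFree i (p + q) := by
  intro m hm; rw [coeff_add, hp m hm, hq m hm, add_zero]

lemma XFree.neg {i : Fin 5} {p : Rp} (hp : XFree i p) : XFree i (-p) := by
  intro m hm; rw [coeff_neg, hp m hm, neg_zero]

lemma XFree.sub {i : Fin 5} {p q : Rp} (hp : XFree i p) (hq : XFree i q) : XFree i (p - q) := by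
  rw [sub_eq_add_neg]; exact hp.add hq.neg

lemma xfree_X {i j : Fin 5} (h : j ≠ i) : XFree i (X j : Rp) := by
  intro m hm
  rw [coeff_X']
  split_ifs with he
  · exfalso; apply hm; rw [← he, Finsupp.single_apply, if_neg h]
  · rfl

lemma xfree_mod (i : Fin 5) (p : Rp) : XFree i (p.modMonomial (Finsupp.single i 1)) := by
  intro m hm
  apply coeff_modMonomial_of_le
  rw [Finsupp.single_le_iff]; omega

lemma eq_zero_of_dvd_of_xfree {i : Fin 5} {p : Rp} (hd : X i ∣ p) (hf : XFree i p) : p = 0 := by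
  ext m
  rw [coeff_zero]
  rcases Nat.eq_zero_or_pos (m i) with h | h
  · exact X_dvd_iff_coeff.1 hd m h
  · exact hf m (by omega)

lemma decomp (i : Fin 5) (p : Rp) :
    p = X i * p.divMonomial (Finsupp.single i 1) + p.modMonomial (Finsupp.single i 1) :=
  (divMonomial_add_modMonomial_single p i).symm


section VecHelpers
variable {A : Type*}
lemma cv2 (x : A) (u : Fin 5 → A) : Matrix.vecCons x u 2 = u 1 := rfl
lemma cv3 (x : A) (u : Fin 5 → A) : Matrix.vecCons x u 3 = u 2 := rfl
lemma cv4 (x : A) (u : Fin 5 → A) : Matrix.vecCons x u 4 = u 3 := rfl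
lemma cv5 (x : A) (u : Fin 5 → A) : Matrix.vecCons x u 5 = u 4 := rfl
lemma cw2 (x : A) (u : Fin 4 → A) : Matrix.vecCons x u 2 = u 1 := rfl
lemma cw3 (x : A) (u : Fin 4 → A) : Matrix.vecCons x u 3 = u 2 := rfl
lemma cw4 (x : A) (u : Fin 4 → A) : Matrix.vecCons x u 4 = u 3 := rfl
lemma cx2 (x : A) (u : Fin 3 → A) : Matrix.vecCons x u 2 = u 1 := rfl
lemma cx3 (x : A) (u : Fin 3 → A) : Matrix.vecCons x u 3 = u 2 := rfl
lemma cy2 (x : A) (u : Fin 2 → A) : Matrix.vecCons x u 2 = u 1 := rfl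
end VecHelpers

lemma K2 {j k : Fin 5} (hjk : j ≠ k) {p q : Rp} (h : p * X j = q * X k) :
    ∃ g, p = X k * g ∧ q = X j * g := by
  set b := q.divMonomial (Finsupp.single j 1) with hb
  set c := q.modMonomial (Finsupp.single j 1) with hc
  have hq : q = X j * b + c := decomp j q
  have hcf : XFree j c := xfree_mod j q
  have hdvd : X j ∣ c * X k := ⟨p - b * X k, by linear_combination -h - X k * hq⟩
  have hc0 : c * X k = 0 := eq_zero_of_dvd_of_xfree hdvd (hcf.mul (xfree_X hjk.symm))
  have hc0' : c = 0 := by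
    rcases mul_eq_zero.1 hc0 with h' | h'
    · exact h'
    · exact absurd h' (X_ne_zero k)
  refine ⟨b, ?_, by rw [hq, hc0', add_zero]⟩
  have : p * X j = (X k * b) * X j := by rw [hq, hc0', add_zero] at h; linear_combination h
  exact mul_right_cancel₀ (X_ne_zero j) this

lemma K3 {p q r : Rp} (h : p * X 1 + q * X 2 + r * X 0 = 0) :
    ∃ s t u : Rp, p = X 2 * s + X 0 * t ∧ q = -(X 1 * s) + X 0 * u ∧ r = -(X 1 * t) - X 2 * u := by
  set t := p.divMonomial (Finsupp.single 0 1) with ht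
  set p' := p.modMonomial (Finsupp.single 0 1) with hp'
  set u := q.divMonomial (Finsupp.single 0 1) with hu
  set q' := q.modMonomial (Finsupp.single 0 1) with hq'
  have hp : p = X 0 * t + p' := decomp 0 p
  have hq : q = X 0 * u + q' := decomp 0 q
  have hfp : XFree 0 p' := xfree_mod 0 p
  have hfq : XFree 0 q' := xfree_mod 0 q
  have hdvd : X 0 ∣ (p' * X 1 + q' * X 2) :=
    ⟨-(r + t * X 1 + u * X 2), by linear_combination h - X 1 * hp - X 2 * hq⟩
  have hzero : p' * X 1 + q' * X 2 = 0 :=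
    eq_zero_of_dvd_of_xfree hdvd
      ((hfp.mul (xfree_X (by decide))).add (hfq.mul (xfree_X (by decide))))
  have hK2 : p' * X 1 = (-q') * X 2 := by linear_combination hzero
  obtain ⟨s, hs1, hs2⟩ := K2 (by decide) hK2
  refine ⟨s, t, u, by linear_combination hp + hs1, by linear_combination hq - hs2, ?_⟩
  have hr : r * X 0 = (-(X 1 * t) - X 2 * u) * X 0 := by
    linear_combination h - X 1 * hp - X 2 * hq - X 1 * hs1 + X 2 * hs2
  exact mul_right_cancel₀ (X_ne_zero 0) hr

lemma var_syzygy (v : Fin 6 → Rp)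
    (h1 : v 0 * X 2 - v 1 * X 1 + v 2 * X 0 = 0)
    (h2 : v 2 * X 3 + v 3 * X 2 - v 4 * X 1 + v 5 * X 0 = 0) :
    ∃ w : Fin 6 → Rp,
      v 0 = w 4 * X 0 + w 5 * X 1 ∧
      v 1 = -(w 3 * X 0) + w 5 * X 2 ∧
      v 2 = -(w 3 * X 1) - w 4 * X 2 ∧
      v 3 = w 1 * X 0 + w 2 * X 1 + w 4 * X 3 ∧
      v 4 = -(w 0 * X 0) + w 2 * X 2 - w 3 * X 3 ∧
      v 5 = -(w 0 * X 1) - w 1 * X 2 := by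
  set a1 := (v 1).divMonomial (Finsupp.single 0 1) with ha1
  set r1 := (v 1).modMonomial (Finsupp.single 0 1) with hr1
  set a0 := (v 0).divMonomial (Finsupp.single 0 1) with ha0
  set r0 := (v 0).modMonomial (Finsupp.single 0 1) with hr0
  have hv1 : v 1 = X 0 * a1 + r1 := decomp 0 (v 1)
  have hv0 : v 0 = X 0 * a0 + r0 := decomp 0 (v 0)
  have hf1 : XFree 0 r1 := xfree_mod 0 (v 1)
  have hf0 : XFree 0 r0 := xfree_mod 0 (v 0)
  have hdvd : X 0 ∣ (r1 * X 1 - r0 * X 2) :=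
    ⟨v 2 - a1 * X 1 + a0 * X 2, by linear_combination -h1 - X 1 * hv1 + X 2 * hv0⟩
  have hzero : r1 * X 1 - r0 * X 2 = 0 :=
    eq_zero_of_dvd_of_xfree hdvd
      ((hf1.mul (xfree_X (by decide))).sub (hf0.mul (xfree_X (by decide))))
  obtain ⟨g, hg1, hg2⟩ := K2 (show (1 : Fin 5) ≠ 2 by decide)
    (show r1 * X 1 = r0 * X 2 by linear_combination hzero)
  -- v 2 = a1 * X 1 - a0 * X 2
  have hv2 : v 2 * X 0 = (a1 * X 1 - a0 * X 2) * X 0 := by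
    linear_combination h1 + X 1 * hv1 - X 2 * hv0 + hzero
  have hv2' : v 2 = a1 * X 1 - a0 * X 2 := mul_right_cancel₀ (X_ne_zero 0) hv2
  -- second stage
  have hK3 : (a1 * X 3 - v 4) * X 1 + (v 3 - a0 * X 3) * X 2 + v 5 * X 0 = 0 := by
    linear_combination h2 - X 3 * hv2'
  obtain ⟨s, t, u, hA, hB, hC⟩ := K3 hK3
  refine ⟨![t, u, -s, -a1, a0, g], ?_, ?_, ?_, ?_, ?_, ?_⟩ <;>
    simp only [Matrix.cons_val_zero, Matrix.cons_val_one, Matrix.head_cons, cv2, cv3, cv4, cv5,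
      cw2, cw3, cw4, cx2, cx3, cy2]
  · linear_combination hv0 + hg2
  · linear_combination hv1 + hg1
  · linear_combination hv2'
  · linear_combination hB
  · linear_combination -hA
  · linear_combination hC


lemma deg_rep {m : Fin 5 →₀ ℕ} (hm : m.degree = 1) : ∃ j, m = Finsupp.single j 1 := by
  classical
  have hne : m.support.Nonempty := by
    rcases Finset.eq_empty_or_nonempty m.support with h | h
    · exfalso
      have hm0 : m = 0 := Finsupp.support_eq_empty.1 h
      rw [hm0] at hm
      simp [Finsupp.degree] at hm
    · exact h
  obtain ⟨j, hj⟩ := hne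
  have hmj : m j ≠ 0 := Finsupp.mem_support_iff.1 hj
  have hsum : m j + ∑ a ∈ m.support.erase j, m a = 1 := by
    rw [Finset.add_sum_erase _ _ hj]; exact hm
  have hmj1 : m j = 1 := by omega
  have hrest : ∑ a ∈ m.support.erase j, m a = 0 := by omega
  refine ⟨j, Finsupp.ext fun a => ?_⟩
  rcases eq_or_ne a j with rfl | ha
  · rw [hmj1, Finsupp.single_eq_same]
  · rw [Finsupp.single_eq_of_ne' (Ne.symm ha)]
    by_contra hma
    have hamem : a ∈ m.support.erase j := Finset.mem_erase.2 ⟨ha, Finsupp.mem_support_iff.2 hma⟩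
    have := (Finset.sum_eq_zero_iff).1 hrest a hamem
    exact hma this

def amat (l : Fin 5 → Rp) : Matrix (Fin 5) (Fin 5) ℂ := fun i j => coeff (Finsupp.single j 1) (l i)

lemma degree_single (j : Fin 5) : (Finsupp.single j 1 : Fin 5 →₀ ℕ).degree = 1 := by
  exact Finsupp.degree_single j 1

lemma hrep (l : Fin 5 → Rp) (hl : ∀ i, (l i).IsHomogeneous 1) (i : Fin 5) :
    l i = ∑ j, C (amat l i j) * X j := by
  classical
  ext m
  rw [coeff_sum]
  by_cases hd : m.degree = 1
  · obtain ⟨j0, rfl⟩ := deg_rep hd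
    have hterm : ∀ j : Fin 5, coeff (Finsupp.single j0 1) (C (amat l i j) * X j)
        = if j = j0 then amat l i j0 else 0 := by
      intro j
      rw [coeff_C_mul, coeff_X']
      rcases eq_or_ne j j0 with rfl | hj
      · simp
      · rw [if_neg (fun he => hj (Finsupp.single_left_injective one_ne_zero he)), if_neg hj,
          mul_zero]
    rw [Finset.sum_congr rfl fun j _ => hterm j, Finset.sum_ite_eq' Finset.univ j0
      (fun _ => amat l i j0), if_pos (Finset.mem_univ _)]
    rfl
  · rw [(hl i).coeff_eq_zero hd]
    symm
    apply Finset.sum_eq_zero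
    intro j _
    rw [coeff_C_mul, coeff_X', if_neg, mul_zero]
    intro he
    exact hd (by rw [← he, degree_single])

lemma amat_unit (l : Fin 5 → Rp) (hl : ∀ i, (l i).IsHomogeneous 1)
    (hind : LinearIndependent ℂ l) : IsUnit (amat l) := by
  rw [← Matrix.linearIndependent_rows_iff_isUnit]
  rw [Fintype.linearIndependent_iff]
  intro g hg
  have hgj : ∀ j, ∑ i, g i * amat l i j = 0 := by
    intro j
    have := congrFun hg j
    simpa [Finset.sum_apply, Pi.smul_apply, smul_eq_mul] using this
  have hgl : ∑ i, g i • l i = 0 := by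
    have step : ∀ j, ∑ i, g i • (C (amat l i j) * X j) = C (∑ i, g i * amat l i j) * X j := by
      intro j
      rw [_root_.map_sum, Finset.sum_mul]
      exact Finset.sum_congr rfl fun i _ => by
        rw [smul_eq_C_mul, ← mul_assoc, ← C_mul]
    calc ∑ i, g i • l i = ∑ i, g i • ∑ j, C (amat l i j) * X j := by
          exact Finset.sum_congr rfl fun i _ => by rw [hrep l hl i]
      _ = ∑ i, ∑ j, g i • (C (amat l i j) * X j) := by
          exact Finset.sum_congr rfl fun i _ => Finset.smul_sum
      _ = ∑ j, ∑ i, g i • (C (amat l i j) * X j) := Finset.sum_comm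
      _ = ∑ j, C (∑ i, g i * amat l i j) * X j := Finset.sum_congr rfl fun j _ => step j
      _ = 0 := by
          apply Finset.sum_eq_zero
          intro j _
          rw [hgj j, _root_.map_zero, zero_mul]
  exact fun i => (Fintype.linearIndependent_iff.1 hind) g hgl i

lemma collapse (c d : Matrix (Fin 5) (Fin 5) ℂ) (h : c * d = 1) (i : Fin 5) :
    ∑ j, C (c i j) * (∑ k, C (d j k) * X k) = (X i : Rp) := by
  classical
  have : ∀ j, C (c i j) * (∑ k, C (d j k) * X k) = ∑ k, C (c i j * d j k) * X k := by
    intro j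
    rw [Finset.mul_sum]
    exact Finset.sum_congr rfl fun k _ => by rw [← mul_assoc, ← C_mul]
  rw [Finset.sum_congr rfl fun j _ => this j, Finset.sum_comm]
  have hck : ∀ k, ∑ j, C (c i j * d j k) * X k = C ((c * d) i k) * X k := by
    intro k
    rw [← Finset.sum_mul, ← _root_.map_sum]
    rfl
  rw [Finset.sum_congr rfl fun k _ => hck k, h]
  have : ∀ k : Fin 5, C ((1 : Matrix (Fin 5) (Fin 5) ℂ) i k) * X k
      = if k = i then (X i : Rp) else 0 := by
    intro k
    rcases eq_or_ne k i with rfl | hk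
    · simp [Matrix.one_apply]
    · rw [Matrix.one_apply, if_neg (Ne.symm hk), _root_.map_zero, zero_mul, if_neg hk]
  rw [Finset.sum_congr rfl fun k _ => this k, Finset.sum_ite_eq' Finset.univ i fun _ => X i,
    if_pos (Finset.mem_univ _)]

lemma exists_auto (l : Fin 5 → Rp) (hl : ∀ i, (l i).IsHomogeneous 1)
    (hind : LinearIndependent ℂ l) :
    ∃ φ ψ : Rp →ₐ[ℂ] Rp, (∀ p, φ (ψ p) = p) ∧ (∀ i, ψ (l i) = X i) ∧ (∀ i, φ (X i) = l i) := by
  classical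
  have hunit := amat_unit l hl hind
  have hdet := (Matrix.isUnit_iff_isUnit_det _).1 hunit
  set a := amat l
  set b := (amat l)⁻¹ with hbdef
  have hab : a * b = 1 := Matrix.mul_nonsing_inv _ hdet
  have hba : b * a = 1 := Matrix.nonsing_inv_mul _ hdet
  refine ⟨aeval l, aeval (fun i => ∑ j, C (b i j) * X j), ?_, ?_, fun i => aeval_X l i⟩
  · intro p
    have hcomp : (aeval l).comp (aeval (fun i => ∑ j, C (b i j) * X j)) = AlgHom.id ℂ Rp := by
      apply MvPolynomial.algHom_ext
      intro i
      rw [AlgHom.comp_apply, aeval_X, _root_.map_sum, AlgHom.id_apply]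
      have : ∀ j, (aeval l) (C (b i j) * X j) = C (b i j) * l j := by
        intro j
        rw [_root_.map_mul, aeval_C, aeval_X, algebraMap_eq]
      rw [Finset.sum_congr rfl fun j _ => this j]
      calc ∑ j, C (b i j) * l j = ∑ j, C (b i j) * (∑ k, C (a j k) * X k) :=
            Finset.sum_congr rfl fun j _ => by rw [hrep l hl j]
        _ = X i := collapse b a hba i
    exact congrFun (congrArg DFunLike.coe hcomp) p
  · intro i
    rw [hrep l hl i, _root_.map_sum]
    have : ∀ j, (aeval (fun i => ∑ j, C (b i j) * X j)) (C (a i j) * X j)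
        = C (a i j) * (∑ k, C (b j k) * X k) := by
      intro j
      rw [_root_.map_mul, aeval_C, aeval_X, algebraMap_eq]
    rw [Finset.sum_congr rfl fun j _ => this j]
    exact collapse a b hab i


lemma sp01 {A : Type*} [CommRing A] (N : Matrix (Fin 6) (Fin 6) A) :
    subPf N 0 1 = N 2 3 * N 4 5 - N 2 4 * N 3 5 + N 2 5 * N 3 4 := rfl
lemma sp02 {A : Type*} [CommRing A] (N : Matrix (Fin 6) (Fin 6) A) :
    subPf N 0 2 = N 1 3 * N 4 5 - N 1 4 * N 3 5 + N 1 5 * N 3 4 := rfl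
lemma sp03 {A : Type*} [CommRing A] (N : Matrix (Fin 6) (Fin 6) A) :
    subPf N 0 3 = N 1 2 * N 4 5 - N 1 4 * N 2 5 + N 1 5 * N 2 4 := rfl
lemma sp04 {A : Type*} [CommRing A] (N : Matrix (Fin 6) (Fin 6) A) :
    subPf N 0 4 = N 1 2 * N 3 5 - N 1 3 * N 2 5 + N 1 5 * N 2 3 := rfl
lemma sp05 {A : Type*} [CommRing A] (N : Matrix (Fin 6) (Fin 6) A) :
    subPf N 0 5 = N 1 2 * N 3 4 - N 1 3 * N 2 4 + N 1 4 * N 2 3 := rfl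
lemma sp12 {A : Type*} [CommRing A] (N : Matrix (Fin 6) (Fin 6) A) :
    subPf N 1 2 = N 0 3 * N 4 5 - N 0 4 * N 3 5 + N 0 5 * N 3 4 := rfl
lemma sp13 {A : Type*} [CommRing A] (N : Matrix (Fin 6) (Fin 6) A) :
    subPf N 1 3 = N 0 2 * N 4 5 - N 0 4 * N 2 5 + N 0 5 * N 2 4 := rfl
lemma sp14 {A : Type*} [CommRing A] (N : Matrix (Fin 6) (Fin 6) A) :
    subPf N 1 4 = N 0 2 * N 3 5 - N 0 3 * N 2 5 + N 0 5 * N 2 3 := rfl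
lemma sp15 {A : Type*} [CommRing A] (N : Matrix (Fin 6) (Fin 6) A) :
    subPf N 1 5 = N 0 2 * N 3 4 - N 0 3 * N 2 4 + N 0 4 * N 2 3 := rfl
lemma sp23 {A : Type*} [CommRing A] (N : Matrix (Fin 6) (Fin 6) A) :
    subPf N 2 3 = N 0 1 * N 4 5 - N 0 4 * N 1 5 + N 0 5 * N 1 4 := rfl
lemma sp24 {A : Type*} [CommRing A] (N : Matrix (Fin 6) (Fin 6) A) :
    subPf N 2 4 = N 0 1 * N 3 5 - N 0 3 * N 1 5 + N 0 5 * N 1 3 := rfl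
lemma sp25 {A : Type*} [CommRing A] (N : Matrix (Fin 6) (Fin 6) A) :
    subPf N 2 5 = N 0 1 * N 3 4 - N 0 3 * N 1 4 + N 0 4 * N 1 3 := rfl
lemma sp34 {A : Type*} [CommRing A] (N : Matrix (Fin 6) (Fin 6) A) :
    subPf N 3 4 = N 0 1 * N 2 5 - N 0 2 * N 1 5 + N 0 5 * N 1 2 := rfl
lemma sp35 {A : Type*} [CommRing A] (N : Matrix (Fin 6) (Fin 6) A) :
    subPf N 3 5 = N 0 1 * N 2 4 - N 0 2 * N 1 4 + N 0 4 * N 1 2 := rfl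
lemma sp45 {A : Type*} [CommRing A] (N : Matrix (Fin 6) (Fin 6) A) :
    subPf N 4 5 = N 0 1 * N 2 3 - N 0 2 * N 1 3 + N 0 3 * N 1 2 := rfl


lemma mem_of_eq {I : Ideal Rp} {x y : Rp} (h : x = y) (hy : y ∈ I) : x ∈ I := h ▸ hy

end Helpers

/-- Proposition 1.2, case (e). -/
theorem type_e_syzygy_and_minors
    (l : Fin 5 → Rp) (hl : ∀ i, (l i).IsHomogeneous 1) (hind : LinearIndependent ℂ l)
    (M : Matrix (Fin 6) (Fin 6) Rp)
    (hM : M = !![0, 0, 0, 0, l 0, l 1;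
                 0, 0, 0, -l 0, 0, l 2;
                 0, 0, 0, -l 1, -l 2, 0;
                 0, l 0, l 1, 0, l 3, 0;
                 -l 0, 0, l 2, -l 3, 0, 0;
                 -l 1, -l 2, 0, 0, 0, 0])
    (S : Matrix (Fin 6) (Fin 2) Rp)
    (hS : S = !![l 2, 0;
                 -l 1, 0;
                 l 0, l 3;
                 0, l 2;
                 0, -l 1;
                 0, l 0]) :
    LinearMap.ker (Matrix.mulVecLin Sᵀ) = LinearMap.range (Matrix.mulVecLin M) ∧
    Ideal.span {x | ∃ i j : Fin 6, i < j ∧ x = S i 0 * S j 1 - S i 1 * S j 0}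
      = pfIdeal4 M := by
  have mem : ∀ α β : Fin 6, α < β → subPf M α β ∈ pfIdeal4 M := fun α β h =>
    Ideal.subset_span ⟨α, β, h, rfl⟩
  have memS : ∀ i j : Fin 6, i < j →
      S i 0 * S j 1 - S i 1 * S j 0 ∈
        Ideal.span {x | ∃ i j : Fin 6, i < j ∧ x = S i 0 * S j 1 - S i 1 * S j 0} :=
    fun i j h => Ideal.subset_span ⟨i, j, h, rfl⟩
  constructor
  · ext v
    simp only [LinearMap.mem_ker, LinearMap.mem_range, Matrix.mulVecLin_apply]
    constructor
    · intro hv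
      have h0 := congrFun hv 0
      have h1 := congrFun hv 1
      rw [hS] at h0 h1
      simp only [Matrix.mulVec, dotProduct, Fin.sum_univ_six, Matrix.transpose_apply,
        Pi.zero_apply, Matrix.cons_val_zero, Matrix.cons_val_one, Matrix.head_cons, Matrix.of_apply,
        Matrix.cons_val', Matrix.empty_val', Matrix.cons_val_fin_one, Matrix.head_fin_const,
        cv2, cv3, cv4, cv5, cw2, cw3, cw4, cx2, cx3, cy2, Fin.isValue, Fin.reduceFinMk] at h0 h1
      obtain ⟨φ, ψ, hφψ, hψl, hφX⟩ := exists_auto l hl hind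
      have e1 : ψ (v 0) * X 2 - ψ (v 1) * X 1 + ψ (v 2) * X 0 = 0 := by
        have := congrArg ψ h0
        simp only [_root_.map_add, _root_.map_sub, _root_.map_mul, _root_.map_neg, _root_.map_zero, hψl] at this
        linear_combination this
      have e2 : ψ (v 2) * X 3 + ψ (v 3) * X 2 - ψ (v 4) * X 1 + ψ (v 5) * X 0 = 0 := by
        have := congrArg ψ h1
        simp only [_root_.map_add, _root_.map_sub, _root_.map_mul, _root_.map_neg, _root_.map_zero, hψl] at this
        linear_combination this
      obtain ⟨w', c0, c1, c2, c3, c4, c5⟩ := var_syzygy (fun i => ψ (v i)) e1 e2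
      have G0 : v 0 = φ (w' 4) * l 0 + φ (w' 5) * l 1 := by
        have := congrArg φ c0
        simp only [_root_.map_add, _root_.map_sub, _root_.map_mul, _root_.map_neg, hφψ, hφX] at this
        linear_combination this
      have G1 : v 1 = -(φ (w' 3) * l 0) + φ (w' 5) * l 2 := by
        have := congrArg φ c1
        simp only [_root_.map_add, _root_.map_sub, _root_.map_mul, _root_.map_neg, hφψ, hφX] at this
        linear_combination this
      have G2 : v 2 = -(φ (w' 3) * l 1) - φ (w' 4) * l 2 := by
        have := congrArg φ c2
        simp only [_root_.map_add, _root_.map_sub, _root_.map_mul, _root_.map_neg, hφψ, hφX] at this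
        linear_combination this
      have G3 : v 3 = φ (w' 1) * l 0 + φ (w' 2) * l 1 + φ (w' 4) * l 3 := by
        have := congrArg φ c3
        simp only [_root_.map_add, _root_.map_sub, _root_.map_mul, _root_.map_neg, hφψ, hφX] at this
        linear_combination this
      have G4 : v 4 = -(φ (w' 0) * l 0) + φ (w' 2) * l 2 - φ (w' 3) * l 3 := by
        have := congrArg φ c4
        simp only [_root_.map_add, _root_.map_sub, _root_.map_mul, _root_.map_neg, hφψ, hφX] at this
        linear_combination this
      have G5 : v 5 = -(φ (w' 0) * l 1) - φ (w' 1) * l 2 := by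
        have := congrArg φ c5
        simp only [_root_.map_add, _root_.map_sub, _root_.map_mul, _root_.map_neg, hφψ, hφX] at this
        linear_combination this
      refine ⟨fun i => φ (w' i), ?_⟩
      funext i
      rw [hM]
      fin_cases i <;>
        simp only [Matrix.mulVec, dotProduct, Fin.sum_univ_six, Matrix.cons_val_zero, Matrix.cons_val_one, Matrix.head_cons, Matrix.of_apply,
        Matrix.cons_val', Matrix.empty_val', Matrix.cons_val_fin_one, Matrix.head_fin_const,
        cv2, cv3, cv4, cv5, cw2, cw3, cw4, cx2, cx3, cy2, Fin.isValue, Fin.reduceFinMk]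
      · linear_combination -G0
      · linear_combination -G1
      · linear_combination -G2
      · linear_combination -G3
      · linear_combination -G4
      · linear_combination -G5
    · rintro ⟨w, rfl⟩
      have hSM : Sᵀ * M = 0 := by
        rw [hS, hM]
        ext i j : 2
        fin_cases i <;> fin_cases j <;>
          (simp only [Matrix.mul_apply, Fin.sum_univ_six, Matrix.transpose_apply,
            Matrix.zero_apply, Matrix.cons_val_zero, Matrix.cons_val_one, Matrix.head_cons, Matrix.of_apply,
        Matrix.cons_val', Matrix.empty_val', Matrix.cons_val_fin_one, Matrix.head_fin_const,
        cv2, cv3, cv4, cv5, cw2, cw3, cw4, cx2, cx3, cy2, Fin.isValue, Fin.reduceFinMk]; ring)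
      rw [Matrix.mulVec_mulVec, hSM, Matrix.zero_mulVec]
  · apply le_antisymm
    · rw [Ideal.span_le]
      rintro x ⟨i, j, hij, rfl⟩
      fin_cases i <;> fin_cases j
      · exact absurd hij (by decide)
      · refine mem_of_eq ?_ (mem 0 1 (by decide))
        rw [sp01, hS, hM]
        simp only [Matrix.cons_val_zero, Matrix.cons_val_one, Matrix.head_cons, Matrix.of_apply,
        Matrix.cons_val', Matrix.empty_val', Matrix.cons_val_fin_one, Matrix.head_fin_const,
        cv2, cv3, cv4, cv5, cw2, cw3, cw4, cx2, cx3, cy2, Fin.isValue, Fin.reduceFinMk]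
        ring
      · refine mem_of_eq ?_ (mem 0 2 (by decide))
        rw [sp02, hS, hM]
        simp only [Matrix.cons_val_zero, Matrix.cons_val_one, Matrix.head_cons, Matrix.of_apply,
        Matrix.cons_val', Matrix.empty_val', Matrix.cons_val_fin_one, Matrix.head_fin_const,
        cv2, cv3, cv4, cv5, cw2, cw3, cw4, cx2, cx3, cy2, Fin.isValue, Fin.reduceFinMk]
        ring
      · refine mem_of_eq ?_ (neg_mem (mem 0 3 (by decide)))
        rw [sp03, hS, hM]
        simp only [Matrix.cons_val_zero, Matrix.cons_val_one, Matrix.head_cons, Matrix.of_apply,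
        Matrix.cons_val', Matrix.empty_val', Matrix.cons_val_fin_one, Matrix.head_fin_const,
        cv2, cv3, cv4, cv5, cw2, cw3, cw4, cx2, cx3, cy2, Fin.isValue, Fin.reduceFinMk]
        ring
      · refine mem_of_eq ?_ (mem 0 4 (by decide))
        rw [sp04, hS, hM]
        simp only [Matrix.cons_val_zero, Matrix.cons_val_one, Matrix.head_cons, Matrix.of_apply,
        Matrix.cons_val', Matrix.empty_val', Matrix.cons_val_fin_one, Matrix.head_fin_const,
        cv2, cv3, cv4, cv5, cw2, cw3, cw4, cx2, cx3, cy2, Fin.isValue, Fin.reduceFinMk]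
        ring
      · refine mem_of_eq ?_ (neg_mem (mem 0 5 (by decide)))
        rw [sp05, hS, hM]
        simp only [Matrix.cons_val_zero, Matrix.cons_val_one, Matrix.head_cons, Matrix.of_apply,
        Matrix.cons_val', Matrix.empty_val', Matrix.cons_val_fin_one, Matrix.head_fin_const,
        cv2, cv3, cv4, cv5, cw2, cw3, cw4, cx2, cx3, cy2, Fin.isValue, Fin.reduceFinMk]
        ring
      · exact absurd hij (by decide)
      · exact absurd hij (by decide)
      · refine mem_of_eq ?_ (neg_mem (mem 1 2 (by decide)))
        rw [sp12, hS, hM]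
        simp only [Matrix.cons_val_zero, Matrix.cons_val_one, Matrix.head_cons, Matrix.of_apply,
        Matrix.cons_val', Matrix.empty_val', Matrix.cons_val_fin_one, Matrix.head_fin_const,
        cv2, cv3, cv4, cv5, cw2, cw3, cw4, cx2, cx3, cy2, Fin.isValue, Fin.reduceFinMk]
        ring
      · refine mem_of_eq ?_ (mem 1 3 (by decide))
        rw [sp13, hS, hM]
        simp only [Matrix.cons_val_zero, Matrix.cons_val_one, Matrix.head_cons, Matrix.of_apply,
        Matrix.cons_val', Matrix.empty_val', Matrix.cons_val_fin_one, Matrix.head_fin_const,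
        cv2, cv3, cv4, cv5, cw2, cw3, cw4, cx2, cx3, cy2, Fin.isValue, Fin.reduceFinMk]
        ring
      · refine mem_of_eq ?_ (neg_mem (mem 1 4 (by decide)))
        rw [sp14, hS, hM]
        simp only [Matrix.cons_val_zero, Matrix.cons_val_one, Matrix.head_cons, Matrix.of_apply,
        Matrix.cons_val', Matrix.empty_val', Matrix.cons_val_fin_one, Matrix.head_fin_const,
        cv2, cv3, cv4, cv5, cw2, cw3, cw4, cx2, cx3, cy2, Fin.isValue, Fin.reduceFinMk]
        ring
      · refine mem_of_eq ?_ (mem 1 5 (by decide))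
        rw [sp15, hS, hM]
        simp only [Matrix.cons_val_zero, Matrix.cons_val_one, Matrix.head_cons, Matrix.of_apply,
        Matrix.cons_val', Matrix.empty_val', Matrix.cons_val_fin_one, Matrix.head_fin_const,
        cv2, cv3, cv4, cv5, cw2, cw3, cw4, cx2, cx3, cy2, Fin.isValue, Fin.reduceFinMk]
        ring
      · exact absurd hij (by decide)
      · exact absurd hij (by decide)
      · exact absurd hij (by decide)
      · refine mem_of_eq ?_ (neg_mem (mem 2 3 (by decide)))
        rw [sp23, hS, hM]
        simp only [Matrix.cons_val_zero, Matrix.cons_val_one, Matrix.head_cons, Matrix.of_apply,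
        Matrix.cons_val', Matrix.empty_val', Matrix.cons_val_fin_one, Matrix.head_fin_const,
        cv2, cv3, cv4, cv5, cw2, cw3, cw4, cx2, cx3, cy2, Fin.isValue, Fin.reduceFinMk]
        ring
      · refine mem_of_eq ?_ (mem 2 4 (by decide))
        rw [sp24, hS, hM]
        simp only [Matrix.cons_val_zero, Matrix.cons_val_one, Matrix.head_cons, Matrix.of_apply,
        Matrix.cons_val', Matrix.empty_val', Matrix.cons_val_fin_one, Matrix.head_fin_const,
        cv2, cv3, cv4, cv5, cw2, cw3, cw4, cx2, cx3, cy2, Fin.isValue, Fin.reduceFinMk]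
        ring
      · refine mem_of_eq ?_ (neg_mem (mem 2 5 (by decide)))
        rw [sp25, hS, hM]
        simp only [Matrix.cons_val_zero, Matrix.cons_val_one, Matrix.head_cons, Matrix.of_apply,
        Matrix.cons_val', Matrix.empty_val', Matrix.cons_val_fin_one, Matrix.head_fin_const,
        cv2, cv3, cv4, cv5, cw2, cw3, cw4, cx2, cx3, cy2, Fin.isValue, Fin.reduceFinMk]
        ring
      · exact absurd hij (by decide)
      · exact absurd hij (by decide)
      · exact absurd hij (by decide)
      · exact absurd hij (by decide)
      · refine mem_of_eq ?_ (mem 3 4 (by decide))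
        rw [sp34, hS, hM]
        simp only [Matrix.cons_val_zero, Matrix.cons_val_one, Matrix.head_cons, Matrix.of_apply,
        Matrix.cons_val', Matrix.empty_val', Matrix.cons_val_fin_one, Matrix.head_fin_const,
        cv2, cv3, cv4, cv5, cw2, cw3, cw4, cx2, cx3, cy2, Fin.isValue, Fin.reduceFinMk]
        ring
      · refine mem_of_eq ?_ (mem 3 5 (by decide))
        rw [sp35, hS, hM]
        simp only [Matrix.cons_val_zero, Matrix.cons_val_one, Matrix.head_cons, Matrix.of_apply,
        Matrix.cons_val', Matrix.empty_val', Matrix.cons_val_fin_one, Matrix.head_fin_const,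
        cv2, cv3, cv4, cv5, cw2, cw3, cw4, cx2, cx3, cy2, Fin.isValue, Fin.reduceFinMk]
        ring
      · exact absurd hij (by decide)
      · exact absurd hij (by decide)
      · exact absurd hij (by decide)
      · exact absurd hij (by decide)
      · exact absurd hij (by decide)
      · refine mem_of_eq ?_ (mem 4 5 (by decide))
        rw [sp45, hS, hM]
        simp only [Matrix.cons_val_zero, Matrix.cons_val_one, Matrix.head_cons, Matrix.of_apply,
        Matrix.cons_val', Matrix.empty_val', Matrix.cons_val_fin_one, Matrix.head_fin_const,
        cv2, cv3, cv4, cv5, cw2, cw3, cw4, cx2, cx3, cy2, Fin.isValue, Fin.reduceFinMk]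
        ring
      · exact absurd hij (by decide)
      · exact absurd hij (by decide)
      · exact absurd hij (by decide)
      · exact absurd hij (by decide)
      · exact absurd hij (by decide)
      · exact absurd hij (by decide)
    · rw [pfIdeal4, Ideal.span_le]
      rintro x ⟨a, b, hab, rfl⟩
      fin_cases a <;> fin_cases b
      · exact absurd hab (by decide)
      · refine mem_of_eq ?_ (memS 0 1 (by decide))
        show subPf M 0 1 = _
        rw [sp01, hS, hM]
        simp only [Matrix.cons_val_zero, Matrix.cons_val_one, Matrix.head_cons, Matrix.of_apply,
        Matrix.cons_val', Matrix.empty_val', Matrix.cons_val_fin_one, Matrix.head_fin_const,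
        cv2, cv3, cv4, cv5, cw2, cw3, cw4, cx2, cx3, cy2, Fin.isValue, Fin.reduceFinMk]
        ring
      · refine mem_of_eq ?_ (memS 0 2 (by decide))
        show subPf M 0 2 = _
        rw [sp02, hS, hM]
        simp only [Matrix.cons_val_zero, Matrix.cons_val_one, Matrix.head_cons, Matrix.of_apply,
        Matrix.cons_val', Matrix.empty_val', Matrix.cons_val_fin_one, Matrix.head_fin_const,
        cv2, cv3, cv4, cv5, cw2, cw3, cw4, cx2, cx3, cy2, Fin.isValue, Fin.reduceFinMk]
        ring
      · refine mem_of_eq ?_ (neg_mem (memS 0 3 (by decide)))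
        show subPf M 0 3 = _
        rw [sp03, hS, hM]
        simp only [Matrix.cons_val_zero, Matrix.cons_val_one, Matrix.head_cons, Matrix.of_apply,
        Matrix.cons_val', Matrix.empty_val', Matrix.cons_val_fin_one, Matrix.head_fin_const,
        cv2, cv3, cv4, cv5, cw2, cw3, cw4, cx2, cx3, cy2, Fin.isValue, Fin.reduceFinMk]
        ring
      · refine mem_of_eq ?_ (memS 0 4 (by decide))
        show subPf M 0 4 = _
        rw [sp04, hS, hM]
        simp only [Matrix.cons_val_zero, Matrix.cons_val_one, Matrix.head_cons, Matrix.of_apply,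
        Matrix.cons_val', Matrix.empty_val', Matrix.cons_val_fin_one, Matrix.head_fin_const,
        cv2, cv3, cv4, cv5, cw2, cw3, cw4, cx2, cx3, cy2, Fin.isValue, Fin.reduceFinMk]
        ring
      · refine mem_of_eq ?_ (neg_mem (memS 0 5 (by decide)))
        show subPf M 0 5 = _
        rw [sp05, hS, hM]
        simp only [Matrix.cons_val_zero, Matrix.cons_val_one, Matrix.head_cons, Matrix.of_apply,
        Matrix.cons_val', Matrix.empty_val', Matrix.cons_val_fin_one, Matrix.head_fin_const,
        cv2, cv3, cv4, cv5, cw2, cw3, cw4, cx2, cx3, cy2, Fin.isValue, Fin.reduceFinMk]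
        ring
      · exact absurd hab (by decide)
      · exact absurd hab (by decide)
      · refine mem_of_eq ?_ (neg_mem (memS 1 2 (by decide)))
        show subPf M 1 2 = _
        rw [sp12, hS, hM]
        simp only [Matrix.cons_val_zero, Matrix.cons_val_one, Matrix.head_cons, Matrix.of_apply,
        Matrix.cons_val', Matrix.empty_val', Matrix.cons_val_fin_one, Matrix.head_fin_const,
        cv2, cv3, cv4, cv5, cw2, cw3, cw4, cx2, cx3, cy2, Fin.isValue, Fin.reduceFinMk]
        ring
      · refine mem_of_eq ?_ (memS 1 3 (by decide))
        show subPf M 1 3 = _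
        rw [sp13, hS, hM]
        simp only [Matrix.cons_val_zero, Matrix.cons_val_one, Matrix.head_cons, Matrix.of_apply,
        Matrix.cons_val', Matrix.empty_val', Matrix.cons_val_fin_one, Matrix.head_fin_const,
        cv2, cv3, cv4, cv5, cw2, cw3, cw4, cx2, cx3, cy2, Fin.isValue, Fin.reduceFinMk]
        ring
      · refine mem_of_eq ?_ (neg_mem (memS 1 4 (by decide)))
        show subPf M 1 4 = _
        rw [sp14, hS, hM]
        simp only [Matrix.cons_val_zero, Matrix.cons_val_one, Matrix.head_cons, Matrix.of_apply,
        Matrix.cons_val', Matrix.empty_val', Matrix.cons_val_fin_one, Matrix.head_fin_const,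
        cv2, cv3, cv4, cv5, cw2, cw3, cw4, cx2, cx3, cy2, Fin.isValue, Fin.reduceFinMk]
        ring
      · refine mem_of_eq ?_ (memS 1 5 (by decide))
        show subPf M 1 5 = _
        rw [sp15, hS, hM]
        simp only [Matrix.cons_val_zero, Matrix.cons_val_one, Matrix.head_cons, Matrix.of_apply,
        Matrix.cons_val', Matrix.empty_val', Matrix.cons_val_fin_one, Matrix.head_fin_const,
        cv2, cv3, cv4, cv5, cw2, cw3, cw4, cx2, cx3, cy2, Fin.isValue, Fin.reduceFinMk]
        ring
      · exact absurd hab (by decide)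
      · exact absurd hab (by decide)
      · exact absurd hab (by decide)
      · refine mem_of_eq ?_ (neg_mem (memS 2 3 (by decide)))
        show subPf M 2 3 = _
        rw [sp23, hS, hM]
        simp only [Matrix.cons_val_zero, Matrix.cons_val_one, Matrix.head_cons, Matrix.of_apply,
        Matrix.cons_val', Matrix.empty_val', Matrix.cons_val_fin_one, Matrix.head_fin_const,
        cv2, cv3, cv4, cv5, cw2, cw3, cw4, cx2, cx3, cy2, Fin.isValue, Fin.reduceFinMk]
        ring
      · refine mem_of_eq ?_ (memS 2 4 (by decide))
        show subPf M 2 4 = _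
        rw [sp24, hS, hM]
        simp only [Matrix.cons_val_zero, Matrix.cons_val_one, Matrix.head_cons, Matrix.of_apply,
        Matrix.cons_val', Matrix.empty_val', Matrix.cons_val_fin_one, Matrix.head_fin_const,
        cv2, cv3, cv4, cv5, cw2, cw3, cw4, cx2, cx3, cy2, Fin.isValue, Fin.reduceFinMk]
        ring
      · refine mem_of_eq ?_ (neg_mem (memS 2 5 (by decide)))
        show subPf M 2 5 = _
        rw [sp25, hS, hM]
        simp only [Matrix.cons_val_zero, Matrix.cons_val_one, Matrix.head_cons, Matrix.of_apply,
        Matrix.cons_val', Matrix.empty_val', Matrix.cons_val_fin_one, Matrix.head_fin_const,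
        cv2, cv3, cv4, cv5, cw2, cw3, cw4, cx2, cx3, cy2, Fin.isValue, Fin.reduceFinMk]
        ring
      · exact absurd hab (by decide)
      · exact absurd hab (by decide)
      · exact absurd hab (by decide)
      · exact absurd hab (by decide)
      · refine mem_of_eq ?_ (memS 3 4 (by decide))
        show subPf M 3 4 = _
        rw [sp34, hS, hM]
        simp only [Matrix.cons_val_zero, Matrix.cons_val_one, Matrix.head_cons, Matrix.of_apply,
        Matrix.cons_val', Matrix.empty_val', Matrix.cons_val_fin_one, Matrix.head_fin_const,
        cv2, cv3, cv4, cv5, cw2, cw3, cw4, cx2, cx3, cy2, Fin.isValue, Fin.reduceFinMk]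
        ring
      · refine mem_of_eq ?_ (memS 3 5 (by decide))
        show subPf M 3 5 = _
        rw [sp35, hS, hM]
        simp only [Matrix.cons_val_zero, Matrix.cons_val_one, Matrix.head_cons, Matrix.of_apply,
        Matrix.cons_val', Matrix.empty_val', Matrix.cons_val_fin_one, Matrix.head_fin_const,
        cv2, cv3, cv4, cv5, cw2, cw3, cw4, cx2, cx3, cy2, Fin.isValue, Fin.reduceFinMk]
        ring
      · exact absurd hab (by decide)
      · exact absurd hab (by decide)
      · exact absurd hab (by decide)
      · exact absurd hab (by decide)
      · exact absurd hab (by decide)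
      · refine mem_of_eq ?_ (memS 4 5 (by decide))
        show subPf M 4 5 = _
        rw [sp45, hS, hM]
        simp only [Matrix.cons_val_zero, Matrix.cons_val_one, Matrix.head_cons, Matrix.of_apply,
        Matrix.cons_val', Matrix.empty_val', Matrix.cons_val_fin_one, Matrix.head_fin_const,
        cv2, cv3, cv4, cv5, cw2, cw3, cw4, cx2, cx3, cy2, Fin.isValue, Fin.reduceFinMk]
        ring
      · exact absurd hab (by decide)
      · exact absurd hab (by decide)
      · exact absurd hab (by decide)
      · exact absurd hab (by decide)
      · exact absurd hab (by decide)
      · exact absurd hab (by decide)
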